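/- arXiv:1809.02012 — 4 statements merged into one kernel-verified Lean document; each statement's English description precedes it below -/
import Mathlib

section
/- Define H_l(p) = (p/(l+p)) * h(p) * h(l) for p ≥ 1, l ≥ 0, where h(p) = 4^{-p} binomial(2p,p), and H_l(0) = 1 if l = 0 and 0 otherwise. Then the double generating function satisfies Σ_{p≥0} Σ_{l≥0} H_l(p) x^l y^p = (x - y√((1-x)/(1-y)))/(x-y) for |x|,|y| < 1 with x ≠ y. -/
open Real Finset
section DGFAux



variable {a : ℕ → ℝ}

lemma dgf_pos (ha0 : a 0 = 1) (harec : ∀ n : ℕ, a (n+1) * (2*n+2) = a n * (2*n+1)) :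
    ∀ n, 0 < a n := by
  intro n
  induction n with
  | zero => simp [ha0]
  | succ k ih =>
      have h2 : (0:ℝ) < 2*k+2 := by positivity
      have := harec k
      nlinarith

lemma dgf_succ_lt (ha0 : a 0 = 1) (harec : ∀ n : ℕ, a (n+1) * (2*n+2) = a n * (2*n+1)) (n : ℕ) :
    a (n+1) < a n := by
  have hp := dgf_pos ha0 harec (n+1)
  have := harec n
  nlinarith

lemma dgf_le_one (ha0 : a 0 = 1) (harec : ∀ n : ℕ, a (n+1) * (2*n+2) = a n * (2*n+1)) (n : ℕ) :
    a n ≤ 1 := by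
  induction n with
  | zero => simp [ha0]
  | succ k ih => exact le_trans (dgf_succ_lt ha0 harec k).le ih


lemma dgf_weighted (m : ℕ) :
    2 * ∑ k ∈ range (m+1), (k:ℝ) * (a k * a (m-k))
      = m * ∑ k ∈ range (m+1), a k * a (m-k) := by
  have h := Finset.sum_range_reflect (fun k => (k:ℝ) * (a k * a (m-k))) (m+1)
  rw [two_mul]
  nth_rewrite 1 [← h]
  rw [Finset.mul_sum, ← Finset.sum_add_distrib]
  apply Finset.sum_congr rfl
  intro j hj
  have hj' : j ≤ m := Nat.lt_succ_iff.mp (mem_range.mp hj)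
  have h1 : m + 1 - 1 - j = m - j := by omega
  have h2 : m - (m - j) = j := Nat.sub_sub_self hj'
  have h3 : ((m - j : ℕ) : ℝ) = (m:ℝ) - j := by
    rw [Nat.cast_sub hj']
  rw [h1, h2, h3]
  ring

lemma dgf_conv (ha0 : a 0 = 1) (harec : ∀ n : ℕ, a (n+1) * (2*n+2) = a n * (2*n+1)) :
    ∀ n : ℕ, ∑ k ∈ range (n+1), a k * a (n-k) = 1 := by
  intro n
  induction n with
  | zero => simp [ha0]
  | succ n ih =>
      have key : 2 * ∑ k ∈ range (n+2), (k:ℝ) * (a k * a (n+1-k))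
          = ((n:ℝ)+1) * ∑ k ∈ range (n+1), a k * a (n-k) := by
        have hshift := Finset.sum_range_succ' (fun k => 2 * ((k:ℝ) * (a k * a (n+1-k)))) (n+1)
        push_cast at hshift
        rw [Finset.mul_sum]
        push_cast
        rw [hshift]
        simp only [Nat.cast_zero, zero_mul, mul_zero, add_zero]
        have hterm : ∀ j : ℕ, 2 * (((j:ℝ)+1) * (a (j+1) * a (n-j)))
            = (2*(j:ℝ)+1) * (a j * a (n-j)) := by
          intro j
          have hr := harec j
          linear_combination a (n-j) * hr
        calc ∑ j ∈ range (n+1), 2 * (((j:ℝ)+1) * (a (j+1) * a (n-j)))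
            = ∑ j ∈ range (n+1), (2*(j:ℝ)+1) * (a j * a (n-j)) := by
              apply Finset.sum_congr rfl; intro j _; exact hterm j
          _ = 2 * ∑ j ∈ range (n+1), (j:ℝ) * (a j * a (n-j))
                + ∑ j ∈ range (n+1), a j * a (n-j) := by
              rw [Finset.mul_sum, ← Finset.sum_add_distrib]
              apply Finset.sum_congr rfl; intro j _; ring
          _ = ((n:ℝ)+1) * ∑ k ∈ range (n+1), a k * a (n-k) := by
              rw [dgf_weighted n]; ring
      have key2 : ((n:ℝ)+1) * ∑ k ∈ range (n+2), a k * a (n+1-k)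
          = 2 * ∑ k ∈ range (n+2), (k:ℝ) * (a k * a (n+1-k)) := by
        have := dgf_weighted (a := a) (n+1)
        push_cast at this ⊢
        linarith
      have hne : ((n:ℝ)+1) ≠ 0 := by positivity
      have : ((n:ℝ)+1) * ∑ k ∈ range (n+2), a k * a (n+1-k) = ((n:ℝ)+1) * 1 := by
        rw [key2, key, ih]
      exact mul_left_cancel₀ hne this

variable {a : ℕ → ℝ}

lemma dgf_rec_div (harec : ∀ n : ℕ, a (n+1) * (2*n+2) = a n * (2*n+1)) (n : ℕ) :
    a (n+1) = a n * (2*(n:ℝ)+1) / (2*(n:ℝ)+2) := by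
  have h2 : ((2:ℝ)*n+2) ≠ 0 := by positivity
  field_simp
  linarith [harec n]

lemma dgf_star (harec : ∀ n : ℕ, a (n+1) * (2*n+2) = a n * (2*n+1)) :
    ∀ p l : ℕ, ∑ b ∈ range p, a (p-1-b) * (a (l+b) / (2*((l:ℝ)+b)+2))
      = (p:ℝ)/((l:ℝ)+p) * a p * a l := by
  intro p
  induction p with
  | zero => intro l; simp
  | succ p ih =>
      intro l
      have hshift := Finset.sum_range_succ'
        (fun b => a (p+1-1-b) * (a (l+b) / (2*((l:ℝ)+b)+2))) p
      rw [hshift]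
      push_cast
      have hre : ∀ b ∈ range p, a (p-(b+1)) * (a (l+(b+1)) / (2*((l:ℝ)+((b:ℝ)+1))+2))
          = a (p-1-b) * (a ((l+1)+b) / (2*(((l:ℝ)+1)+(b:ℝ))+2)) := by
        intro b _
        have h1 : p - (b+1) = p - 1 - b := by omega
        have h2 : l + (b+1) = (l+1) + b := by omega
        rw [h1, h2]
        ring_nf
      rw [Finset.sum_congr rfl hre]
      have ih' := ih (l+1)
      push_cast at ih'
      rw [ih']
      simp only [Nat.sub_zero, add_zero, Nat.cast_zero]
      have e1 : a (l+1) = a l * (2*(l:ℝ)+1) / (2*(l:ℝ)+2) := dgf_rec_div harec l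
      have e2 : a (p+1) = a p * (2*(p:ℝ)+1) / (2*(p:ℝ)+2) := dgf_rec_div harec p
      rw [e1, e2]
      have d1 : ((l:ℝ)+1) + p ≠ 0 := by positivity
      have d2 : (2*(l:ℝ)+2) ≠ 0 := by positivity
      have d3 : (2*(p:ℝ)+2) ≠ 0 := by positivity
      have d4 : ((l:ℝ)) + ((p:ℕ)+1:ℕ) ≠ 0 := by positivity
      push_cast at d4 ⊢
      have d4' : ((l:ℝ)) + ((p:ℝ)+1) ≠ 0 := by positivity
      field_simp
      ring

variable {a : ℕ → ℝ} {t x y : ℝ}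

lemma dgf_abs_summable (hpos : ∀ n, 0 < a n) (hle : ∀ n, a n ≤ 1) (ht : |t| < 1) :
    Summable (fun n => |a n * t ^ n|) := by
  apply Summable.of_nonneg_of_le (fun n => abs_nonneg _) (fun n => ?_)
    (summable_geometric_of_lt_one (abs_nonneg t) ht)
  rw [abs_mul, abs_pow]
  calc |a n| * |t|^n ≤ 1 * |t|^n := by
        apply mul_le_mul_of_nonneg_right _ (by positivity)
        rw [abs_of_pos (hpos n)]; exact hle n
    _ = |t|^n := one_mul _

lemma dgf_G1 (ha0 : a 0 = 1) (harec : ∀ n : ℕ, a (n+1) * (2*n+2) = a n * (2*n+1))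
    (hpos : ∀ n, 0 < a n) (hle : ∀ n, a n ≤ 1) (ht : |t| < 1) :
    HasSum (fun n => a n * t ^ n) ((Real.sqrt (1-t))⁻¹) := by
  have habs : Summable (fun n => ‖a n * t ^ n‖) := dgf_abs_summable hpos hle ht
  have hs : Summable (fun n => a n * t ^ n) := habs.of_norm
  set g := ∑' n, a n * t ^ n with hg
  -- Cauchy product gives g^2 = (1-t)⁻¹
  have hcauchy := tsum_mul_tsum_eq_tsum_sum_range_of_summable_norm habs habs
  have hconv : ∀ n : ℕ, ∑ k ∈ range (n+1), (a k * t ^ k) * (a (n-k) * t ^ (n-k)) = t ^ n := by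
    intro n
    have : ∀ k ∈ range (n+1), (a k * t ^ k) * (a (n-k) * t ^ (n-k))
        = (a k * a (n-k)) * t ^ n := by
      intro k hk
      have hk' : k ≤ n := Nat.lt_succ_iff.mp (mem_range.mp hk)
      have : t ^ k * t ^ (n-k) = t ^ n := by
        rw [← pow_add, Nat.add_sub_cancel' hk']
      calc (a k * t ^ k) * (a (n-k) * t ^ (n-k)) = (a k * a (n-k)) * (t^k * t^(n-k)) := by ring
        _ = (a k * a (n-k)) * t ^ n := by rw [this]
    rw [Finset.sum_congr rfl this, ← Finset.sum_mul]
    rw [dgf_conv ha0 harec n, one_mul]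
  have hg2 : g * g = (1-t)⁻¹ := by
    rw [hg, hcauchy]
    have : ∀ n : ℕ, ∑ k ∈ range (n+1), (a k * t ^ k) * (a (n-k) * t ^ (n-k)) = t ^ n := hconv
    calc ∑' (n : ℕ), ∑ k ∈ range (n+1), (a k * t ^ k) * (a (n-k) * t ^ (n-k))
        = ∑' (n : ℕ), t ^ n := by exact tsum_congr this
      _ = (1-t)⁻¹ := (hasSum_geometric_of_abs_lt_one ht).tsum_eq
  -- positivity of g
  have h2inj : Function.Injective (fun m : ℕ => 2 * m) := by intro m n h; dsimp only at h; omega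
  have h2inj' : Function.Injective (fun m : ℕ => 2 * m + 1) := by intro m n h; dsimp only at h; omega
  have he : Summable (fun m => a (2*m) * t ^ (2*m)) := hs.comp_injective h2inj
  have ho : Summable (fun m => a (2*m+1) * t ^ (2*m+1)) := hs.comp_injective h2inj'
  have heo : HasSum (fun n => a n * t ^ n) ((∑' m, a (2*m) * t ^ (2*m)) + ∑' m, a (2*m+1) * t ^ (2*m+1)) :=
    HasSum.even_add_odd he.hasSum ho.hasSum
  have hgeo : g = (∑' m, a (2*m) * t ^ (2*m)) + ∑' m, a (2*m+1) * t ^ (2*m+1) :=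
    hs.hasSum.unique heo
  have hpair : HasSum (fun m => a (2*m) * t ^ (2*m) + a (2*m+1) * t ^ (2*m+1))
      ((∑' m, a (2*m) * t ^ (2*m)) + ∑' m, a (2*m+1) * t ^ (2*m+1)) :=
    he.hasSum.add ho.hasSum
  have habs' := abs_lt.mp ht
  have hterm_nonneg : ∀ m : ℕ, 0 ≤ a (2*m) * t ^ (2*m) + a (2*m+1) * t ^ (2*m+1) := by
    intro m
    have h1 : a (2*m) * t ^ (2*m) + a (2*m+1) * t ^ (2*m+1)
        = t ^ (2*m) * (a (2*m) + a (2*m+1) * t) := by ring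
    rw [h1]
    apply mul_nonneg
    · rw [pow_mul']; positivity
    · have hlt : a (2*m+1) < a (2*m) := dgf_succ_lt ha0 harec (2*m)
      have := hpos (2*m+1)
      nlinarith
  have hterm0 : 0 < a 0 * t ^ 0 + a 1 * t ^ 1 := by
    have hlt : a 1 < a 0 := dgf_succ_lt ha0 harec 0
    have := hpos 1
    simp only [pow_zero, pow_one, mul_one, ha0]
    nlinarith
  have hgpos : 0 < g := by
    rw [hgeo, ← hpair.tsum_eq]
    exact Summable.tsum_pos hpair.summable hterm_nonneg 0 hterm0
  have h1t : 0 < 1 - t := by linarith [habs'.2]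
  have hfinal : (Real.sqrt (1-t))⁻¹ = g := by
    rw [← Real.sqrt_inv, ← hg2, Real.sqrt_mul_self hgpos.le]
  rw [hfinal]
  exact hs.hasSum

lemma dgf_G2 (ha0 : a 0 = 1) (harec : ∀ n : ℕ, a (n+1) * (2*n+2) = a n * (2*n+1))
    (hpos : ∀ n, 0 < a n) (hle : ∀ n, a n ≤ 1) (ht : |t| < 1) :
    HasSum (fun n => (a n / (2*(n:ℝ)+2)) * t ^ (n+1)) (1 - Real.sqrt (1-t)) := by
  have h1 := dgf_G1 ha0 harec hpos hle ht
  have h2 : HasSum (fun n => (a n * t ^ n) * t) ((Real.sqrt (1-t))⁻¹ * t) := h1.mul_right t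
  have h3 : HasSum (fun n => a (n+1) * t ^ (n+1)) ((Real.sqrt (1-t))⁻¹ - 1) := by
    apply (hasSum_nat_add_iff (f := fun n => a n * t ^ n) 1).mpr
    simpa [ha0] using h1
  have h4 := h2.sub h3
  have habs' := abs_lt.mp ht
  have h1t : 0 < 1 - t := by linarith [habs'.2]
  have hsq : Real.sqrt (1-t) * Real.sqrt (1-t) = 1 - t := Real.mul_self_sqrt h1t.le
  have hsqpos : 0 < Real.sqrt (1-t) := Real.sqrt_pos.mpr h1t
  have hval : (Real.sqrt (1-t))⁻¹ * t - ((Real.sqrt (1-t))⁻¹ - 1) = 1 - Real.sqrt (1-t) := by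
    have hne : Real.sqrt (1-t) ≠ 0 := ne_of_gt hsqpos
    field_simp
    linear_combination hsq
  rw [hval] at h4
  have hfun : ∀ n : ℕ, (a n * t ^ n) * t - a (n+1) * t ^ (n+1)
      = (a n / (2*(n:ℝ)+2)) * t ^ (n+1) := by
    intro n
    have h2n : ((2:ℝ)*n+2) ≠ 0 := by positivity
    have hr := harec n
    field_simp
    linear_combination (-(t * t^n)) * hr
  simpa only [hfun] using h4

lemma dgf_c_norm_summable (hpos : ∀ n, 0 < a n) (hle : ∀ n, a n ≤ 1)
    (hx : |x| < 1) (hy : |y| < 1) :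
    Summable (fun q : ℕ × ℕ => ‖(a (q.1+q.2) / (2*((q.1:ℝ)+(q.2:ℝ))+2)) * x ^ q.1 * y ^ q.2‖) := by
  have hmaj : Summable (fun q : ℕ × ℕ => |x| ^ q.1 * |y| ^ q.2) :=
    (summable_geometric_of_lt_one (abs_nonneg x) hx).mul_of_nonneg
      (summable_geometric_of_lt_one (abs_nonneg y) hy)
      (fun n => by positivity) (fun n => by positivity)
  apply Summable.of_nonneg_of_le (fun q => norm_nonneg _) (fun q => ?_) hmaj
  rcases q with ⟨l, b⟩
  have h1 : (0:ℝ) < 2*((l:ℝ)+(b:ℝ))+2 := by positivity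
  have h2 : a (l+b) / (2*((l:ℝ)+(b:ℝ))+2) ≤ 1 := by
    rw [div_le_one h1]
    have := hle (l+b); have := hpos (l+b); nlinarith
  have h3 : 0 < a (l+b) / (2*((l:ℝ)+(b:ℝ))+2) := div_pos (hpos _) h1
  simp only [Real.norm_eq_abs, abs_mul, abs_pow]
  calc |a (l+b) / (2*((l:ℝ)+(b:ℝ))+2)| * |x|^l * |y|^b
      ≤ 1 * |x|^l * |y|^b := by
        apply mul_le_mul_of_nonneg_right _ (by positivity)
        apply mul_le_mul_of_nonneg_right _ (by positivity)
        rw [abs_of_pos h3]; exact h2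
    _ = |x|^l * |y|^b := by ring

lemma dgf_G3 (ha0 : a 0 = 1) (harec : ∀ n : ℕ, a (n+1) * (2*n+2) = a n * (2*n+1))
    (hpos : ∀ n, 0 < a n) (hle : ∀ n, a n ≤ 1)
    (hx : |x| < 1) (hy : |y| < 1) (hxy : x ≠ y) :
    HasSum (fun q : ℕ × ℕ => (a (q.1+q.2) / (2*((q.1:ℝ)+(q.2:ℝ))+2)) * x ^ q.1 * y ^ q.2)
      ((Real.sqrt (1-y) - Real.sqrt (1-x)) / (x - y)) := by
  set c : ℕ × ℕ → ℝ :=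
    fun q => (a (q.1+q.2) / (2*((q.1:ℝ)+(q.2:ℝ))+2)) * x ^ q.1 * y ^ q.2 with hc_def
  have hc_norm := dgf_c_norm_summable hpos hle hx hy
  have hc : Summable c := hc_norm.of_norm
  set e := Finset.HasAntidiagonal.sigmaAntidiagonalEquivProd (A := ℕ)
  have hce : Summable (c ∘ e) := e.summable_iff.mpr hc
  -- fiber sums
  have hxy' : x - y ≠ 0 := sub_ne_zero.mpr hxy
  have hfiber : ∀ n : ℕ, HasSum (fun kb : (Finset.HasAntidiagonal.antidiagonal n : Finset (ℕ × ℕ)) => (c ∘ e) ⟨n, kb⟩)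
      (((a n / (2*(n:ℝ)+2)) * x ^ (n+1) - (a n / (2*(n:ℝ)+2)) * y ^ (n+1)) / (x - y)) := by
    intro n
    have h1 : HasSum (fun kb : (Finset.HasAntidiagonal.antidiagonal n : Finset (ℕ × ℕ)) => (c ∘ e) ⟨n, kb⟩)
        (∑ kb : (Finset.HasAntidiagonal.antidiagonal n : Finset (ℕ × ℕ)), (c ∘ e) ⟨n, kb⟩) := hasSum_fintype _
    convert h1 using 1
    have h2 : ∑ kb : (Finset.HasAntidiagonal.antidiagonal n : Finset (ℕ × ℕ)), (c ∘ e) ⟨n, kb⟩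
        = ∑ kb ∈ Finset.HasAntidiagonal.antidiagonal n, c kb := by
      rw [← Finset.sum_coe_sort (Finset.HasAntidiagonal.antidiagonal n) c]
      rfl
    rw [h2, Finset.Nat.sum_antidiagonal_eq_sum_range_succ_mk]
    have h3 : ∀ k ∈ range (n+1), c (k, n - k) = (a n / (2*(n:ℝ)+2)) * (x ^ k * y ^ (n-k)) := by
      intro k hk
      have hk' : k ≤ n := Nat.lt_succ_iff.mp (mem_range.mp hk)
      have hsum : k + (n - k) = n := Nat.add_sub_cancel' hk'
      simp only [hc_def]
      rw [hsum]
      have : ((k:ℝ) + ((n-k:ℕ):ℝ)) = (n:ℝ) := by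
        rw [Nat.cast_sub hk']; ring
      rw [this]
      ring
    rw [Finset.sum_congr rfl h3, ← Finset.mul_sum]
    have hgeom : (∑ k ∈ range (n+1), x ^ k * y ^ (n - k)) * (x - y) = x ^ (n+1) - y ^ (n+1) := by
      have := geom_sum₂_mul x y (n+1)
      simpa using this
    rw [div_eq_iff hxy', mul_assoc, hgeom]
    ring
  have hrow : HasSum (fun n => ((a n / (2*(n:ℝ)+2)) * x ^ (n+1) - (a n / (2*(n:ℝ)+2)) * y ^ (n+1)) / (x - y))
      (((1 - Real.sqrt (1-x)) - (1 - Real.sqrt (1-y))) / (x - y)) :=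
    ((dgf_G2 ha0 harec hpos hle hx).sub (dgf_G2 ha0 harec hpos hle hy)).div_const (x - y)
  have hsig : HasSum (fun n => ((a n / (2*(n:ℝ)+2)) * x ^ (n+1) - (a n / (2*(n:ℝ)+2)) * y ^ (n+1)) / (x - y))
      (∑' r, (c ∘ e) r) := HasSum.sigma hce.hasSum hfiber
  have hval : (∑' r, (c ∘ e) r) = ((1 - Real.sqrt (1-x)) - (1 - Real.sqrt (1-y))) / (x - y) :=
    hsig.unique hrow
  have : HasSum (c ∘ e) (((1 - Real.sqrt (1-x)) - (1 - Real.sqrt (1-y))) / (x - y)) := by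
    rw [← hval]; exact hce.hasSum
  have hfin := e.hasSum_iff.mp this
  convert hfin using 2
  ring

def dgfEquiv : (ℕ × (ℕ × ℕ)) ≃ (Σ q : ℕ × ℕ, {kb : ℕ × ℕ // kb ∈ Finset.HasAntidiagonal.antidiagonal q.2}) where
  toFun r := ⟨(r.2.1, r.1 + r.2.2), ⟨(r.1, r.2.2), Finset.HasAntidiagonal.mem_antidiagonal.mpr rfl⟩⟩
  invFun s := (s.2.1.1, (s.1.1, s.2.1.2))
  left_inv := fun r => rfl
  right_inv := by
    rintro ⟨⟨l, n⟩, ⟨⟨k, b⟩, hm⟩⟩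
    rw [Finset.HasAntidiagonal.mem_antidiagonal] at hm
    simp only at hm
    subst hm
    rfl


lemma dgf_fiber (harec : ∀ n : ℕ, a (n+1) * (2*n+2) = a n * (2*n+1)) (l n : ℕ) :
    ∑ kb ∈ Finset.HasAntidiagonal.antidiagonal n,
      (y * ((a kb.1 * y ^ kb.1) * ((a (l+kb.2) / (2*((l:ℝ)+(kb.2:ℝ))+2)) * x ^ l * y ^ kb.2)))
      = (((n:ℝ)+1)/((l:ℝ)+((n:ℝ)+1))) * a (n+1) * a l * x ^ l * y ^ (n+1) := by
  rw [Finset.Nat.sum_antidiagonal_eq_sum_range_succ_mk]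
  have h3 : ∀ k ∈ range (n+1),
      y * ((a k * y ^ k) * ((a (l+(n-k)) / (2*((l:ℝ)+((n-k:ℕ):ℝ))+2)) * x ^ l * y ^ (n-k)))
        = (x ^ l * y ^ (n+1)) * (a k * (a (l+(n-k)) / (2*((l:ℝ)+((n-k:ℕ):ℝ))+2))) := by
    intro k hk
    have hk' : k ≤ n := Nat.lt_succ_iff.mp (mem_range.mp hk)
    have hpow : y * (y ^ k * y ^ (n-k)) = y ^ (n+1) := by
      rw [← pow_add, Nat.add_sub_cancel' hk', ← pow_succ']
    calc y * ((a k * y ^ k) * ((a (l+(n-k)) / (2*((l:ℝ)+((n-k:ℕ):ℝ))+2)) * x ^ l * y ^ (n-k)))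
        = (y * (y ^ k * y ^ (n-k))) * x ^ l * (a k * (a (l+(n-k)) / (2*((l:ℝ)+((n-k:ℕ):ℝ))+2))) := by
          ring
      _ = (x ^ l * y ^ (n+1)) * (a k * (a (l+(n-k)) / (2*((l:ℝ)+((n-k:ℕ):ℝ))+2))) := by
          rw [hpow]; ring
  rw [Finset.sum_congr rfl h3, ← Finset.mul_sum]
  have hrefl := Finset.sum_range_reflect
    (fun k => a k * (a (l+(n-k)) / (2*((l:ℝ)+((n-k:ℕ):ℝ))+2))) (n+1)
  have hre2 : ∀ j ∈ range (n+1),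
      a (n+1-1-j) * (a (l+(n-(n+1-1-j))) / (2*((l:ℝ)+((n-(n+1-1-j):ℕ):ℝ))+2))
        = a ((n+1)-1-j) * (a (l+j) / (2*((l:ℝ)+(j:ℝ))+2)) := by
    intro j hj
    have hj' : j ≤ n := Nat.lt_succ_iff.mp (mem_range.mp hj)
    have h1 : n + 1 - 1 - j = n - j := by omega
    have h2 : n - (n - j) = j := Nat.sub_sub_self hj'
    rw [h1, h2]
  rw [← hrefl, Finset.sum_congr rfl hre2, dgf_star harec (n+1) l]
  push_cast
  ring

set_option maxHeartbeats 1000000 in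
lemma dgf_T (ha0 : a 0 = 1) (harec : ∀ n : ℕ, a (n+1) * (2*n+2) = a n * (2*n+1))
    (hpos : ∀ n, 0 < a n) (hle : ∀ n, a n ≤ 1)
    (hx : |x| < 1) (hy : |y| < 1) (hxy : x ≠ y) :
    HasSum (fun q : ℕ × ℕ =>
        (((q.2:ℝ)+1)/((q.1:ℝ)+((q.2:ℝ)+1))) * a (q.2+1) * a q.1 * x ^ q.1 * y ^ (q.2+1))
      (y * ((Real.sqrt (1-y))⁻¹ * ((Real.sqrt (1-y) - Real.sqrt (1-x)) / (x - y)))) := by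
  have hay_norm : Summable (fun k => ‖a k * y ^ k‖) := dgf_abs_summable hpos hle hy
  have hG1y : HasSum (fun k => a k * y ^ k) ((Real.sqrt (1-y))⁻¹) := dgf_G1 ha0 harec hpos hle hy
  set c : ℕ × ℕ → ℝ :=
    fun q => (a (q.1+q.2) / (2*((q.1:ℝ)+(q.2:ℝ))+2)) * x ^ q.1 * y ^ q.2 with hc_def
  have hG3 := dgf_G3 ha0 harec hpos hle hx hy hxy
  have hc_norm := dgf_c_norm_summable hpos hle hx hy (a := a)
  have hprod_sum : Summable (fun r : ℕ × (ℕ × ℕ) => (a r.1 * y ^ r.1) * c r.2) :=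
    summable_mul_of_summable_norm hay_norm hc_norm
  have hP : HasSum (fun r : ℕ × (ℕ × ℕ) => (a r.1 * y ^ r.1) * c r.2)
      ((Real.sqrt (1-y))⁻¹ * ((Real.sqrt (1-y) - Real.sqrt (1-x)) / (x - y))) :=
    hG1y.mul hG3 hprod_sum
  have hPy := hP.mul_left y
  set P : ℕ × (ℕ × ℕ) → ℝ := fun r => y * ((a r.1 * y ^ r.1) * c r.2) with hP_def
  have hPe : HasSum (P ∘ dgfEquiv.symm)
      (y * ((Real.sqrt (1-y))⁻¹ * ((Real.sqrt (1-y) - Real.sqrt (1-x)) / (x - y)))) := by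
    apply dgfEquiv.symm.hasSum_iff.mpr
    exact hPy
  have hfiber : ∀ q : ℕ × ℕ,
      HasSum (fun kb : {kb : ℕ × ℕ // kb ∈ Finset.HasAntidiagonal.antidiagonal q.2} => (P ∘ dgfEquiv.symm) ⟨q, kb⟩)
        ((((q.2:ℝ)+1)/((q.1:ℝ)+((q.2:ℝ)+1))) * a (q.2+1) * a q.1 * x ^ q.1 * y ^ (q.2+1)) := by
    rintro ⟨l, n⟩
    have h1 := hasSum_fintype
      (fun kb : {kb : ℕ × ℕ // kb ∈ Finset.HasAntidiagonal.antidiagonal n} => (P ∘ dgfEquiv.symm) ⟨(l, n), kb⟩)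
    convert h1 using 1
    have h2 : ∑ kb : {kb : ℕ × ℕ // kb ∈ Finset.HasAntidiagonal.antidiagonal n}, (P ∘ dgfEquiv.symm) ⟨(l, n), kb⟩
        = ∑ kb ∈ Finset.HasAntidiagonal.antidiagonal n,
            (y * ((a kb.1 * y ^ kb.1) * ((a (l+kb.2) / (2*((l:ℝ)+(kb.2:ℝ))+2)) * x ^ l * y ^ kb.2))) := by
      rw [← Finset.sum_coe_sort (Finset.HasAntidiagonal.antidiagonal n)
        (fun kb => (y * ((a kb.1 * y ^ kb.1) * ((a (l+kb.2) / (2*((l:ℝ)+(kb.2:ℝ))+2)) * x ^ l * y ^ kb.2))))]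
      rfl
    rw [h2, dgf_fiber harec l n]
  exact HasSum.sigma hPe hfiber


end DGFAux

/-- With `h(p) = 4^{-p} binomial(2p,p)`, `H_l(p) = (p/(l+p)) h(p) h(l)` for `p ≥ 1`,
`H_l(0) = 1_{l=0}`, the double generating function satisfies
`Σ_{p≥0} Σ_{l≥0} H_l(p) x^l y^p = (x - y√((1-x)/(1-y)))/(x-y)` for `|x|,|y| < 1`, `x ≠ y`. -/
theorem double_gen_fun_H (h : ℕ → ℝ) (H : ℕ → ℕ → ℝ)
    (hh : ∀ p : ℕ, h p = (Nat.choose (2 * p) p : ℝ) / 4 ^ p)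
    (hH1 : ∀ l p : ℕ, 1 ≤ p → H l p = ((p : ℝ) / ((l : ℝ) + p)) * h p * h l)
    (hH0 : ∀ l : ℕ, H l 0 = if l = 0 then 1 else 0)
    (x y : ℝ) (hx : |x| < 1) (hy : |y| < 1) (hxy : x ≠ y) :
    HasSum (fun q : ℕ × ℕ => H q.1 q.2 * x ^ q.1 * y ^ q.2)
      ((x - y * Real.sqrt ((1 - x) / (1 - y))) / (x - y)) := by
  have ha0 : h 0 = 1 := by rw [hh]; norm_num
  have harec : ∀ n : ℕ, h (n+1) * (2*(n:ℝ)+2) = h n * (2*(n:ℝ)+1) := by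
    intro n
    have hnat := Nat.succ_mul_centralBinom_succ n
    have hR := congrArg (fun m : ℕ => (m:ℝ)) hnat
    simp only [Nat.centralBinom_eq_two_mul_choose] at hR
    push_cast at hR
    rw [hh, hh]
    have h4 : (4:ℝ)^n ≠ 0 := by positivity
    have h4' : (4:ℝ)^(n+1) ≠ 0 := by positivity
    field_simp
    linear_combination (2 * (4:ℝ)^n) * hR
  have hpos := dgf_pos ha0 harec
  have hle := dgf_le_one ha0 harec
  have habsx := abs_lt.mp hx
  have habsy := abs_lt.mp hy
  have h1x : (0:ℝ) < 1 - x := by linarith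
  have h1y : (0:ℝ) < 1 - y := by linarith
  have hv : 0 < Real.sqrt (1-y) := Real.sqrt_pos.mpr h1y
  have hxy' : x - y ≠ 0 := sub_ne_zero.mpr hxy
  have hT := dgf_T ha0 harec hpos hle hx hy hxy
  have hTH : (fun q : ℕ × ℕ =>
        (((q.2:ℝ)+1)/((q.1:ℝ)+((q.2:ℝ)+1))) * h (q.2+1) * h q.1 * x ^ q.1 * y ^ (q.2+1))
      = fun q : ℕ × ℕ => H q.1 (q.2+1) * x ^ q.1 * y ^ (q.2+1) := by
    funext q
    rw [hH1 q.1 (q.2+1) (Nat.le_add_left 1 q.2)]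
    push_cast
    ring
  rw [hTH] at hT
  set T := y * ((Real.sqrt (1-y))⁻¹ * ((Real.sqrt (1-y) - Real.sqrt (1-x)) / (x - y))) with hT_def
  set F : ℕ × ℕ → ℝ := fun q => H q.1 q.2 * x ^ q.1 * y ^ q.2 with hF_def
  set j : ℕ × ℕ → ℕ × ℕ := fun q => (q.1, q.2+1) with hj_def
  have hj : Function.Injective j := by
    intro p q hpq
    simp only [hj_def, Prod.ext_iff] at hpq ⊢
    exact ⟨hpq.1, by omega⟩
  set Fp : ℕ × ℕ → ℝ := fun q => if q.2 = 0 then 0 else F q with hFp_def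
  have hrange : ∀ q : ℕ × ℕ, q ∉ Set.range j → Fp q = 0 := by
    intro q hq
    by_cases h0 : q.2 = 0
    · simp [hFp_def, h0]
    · exfalso
      apply hq
      exact ⟨(q.1, q.2 - 1), by simp only [hj_def]; ext <;> simp <;> omega⟩
  have hcomp : (Fp ∘ j) = fun q : ℕ × ℕ => F (q.1, q.2+1) := by
    funext q
    simp [hFp_def, hj_def]
  have hFp : HasSum Fp T := by
    apply (hj.hasSum_iff hrange).mp
    rw [hcomp]
    exact hT
  have hF0 : HasSum (fun q : ℕ × ℕ => if q = ((0:ℕ), (0:ℕ)) then (1:ℝ) else 0) 1 :=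
    hasSum_ite_eq ((0:ℕ), (0:ℕ)) 1
  have hsum := hF0.add hFp
  have hpt : (fun q : ℕ × ℕ => (if q = ((0:ℕ), (0:ℕ)) then (1:ℝ) else 0) + Fp q) = F := by
    funext q
    rcases q with ⟨l, p⟩
    rcases p with _ | m
    · rcases l with _ | k
      · simp [hFp_def, hF_def, hH0]
      · simp [hFp_def, hF_def, hH0, Prod.ext_iff]
    · have : ((l, m+1) : ℕ × ℕ) ≠ ((0:ℕ), (0:ℕ)) := by simp [Prod.ext_iff]
      simp [hFp_def, this]
  rw [hpt] at hsum
  have hval : 1 + T = (x - y * Real.sqrt ((1 - x) / (1 - y))) / (x - y) := by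
    rw [hT_def, Real.sqrt_div h1x.le (1-y)]
    field_simp
    ring
  rw [← hval]
  exact hsum
end

section
/- For p ≥ 0, k ≥ 0, with h(p) = 4^{-p} binomial(2p,p) and H_l(p) = (p/(l+p)) h(p) h(l) for p ≥ 1 (and H_l(0) = 1_{l=0}), the convolution identity h(p+k) = Σ_{l=0}^{k} H_l(p) h(k-l) holds. -/
/-!
Write `c n = binom(2n, n) / 4^n`, so that `c (n + 1) = (2n+1)/(2n+2) * c n`. For real `s > 0` put
`A_s(k) = ∑_{m ≤ k} c m c (k-m) / (m + s)`; the theorem for `p ≥ 1` says `p c(p) A_p(k) = c(p+k)`.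
A partial fraction decomposition of `c (k+1-m) / (m + s)` expresses `A_s(k+1)` through `A_s(k)`
and the reflected sum `A_1(k)`, so this identity follows by induction on `k` for all `p` at once:
in the inductive step the contributions of the new term `m = k + 1` and of `A_1(k) = 2 c(k+1)`
cancel, leaving `c(p+k+1) = (2(p+k)+1)/(2(p+k)+2) * c(p+k)`.
-/

open Finset

noncomputable def centralBinomRatio (n : ℕ) : ℝ := n.centralBinom / 4 ^ n

noncomputable def shiftedConv (s : ℝ) (k : ℕ) : ℝ :=
  ∑ m ∈ range (k + 1), centralBinomRatio m * centralBinomRatio (k - m) / (m + s)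

lemma centralBinomRatio_zero : centralBinomRatio 0 = 1 := by
  simp [centralBinomRatio]

lemma centralBinomRatio_succ (n : ℕ) :
    centralBinomRatio (n + 1) = (2 * n + 1) / (2 * n + 2) * centralBinomRatio n := by
  have hc : ((n + 1 : ℕ) : ℝ) * (n + 1).centralBinom = 2 * (2 * n + 1) * n.centralBinom := by
    exact_mod_cast Nat.succ_mul_centralBinom_succ n
  simp only [centralBinomRatio, pow_succ]
  field_simp
  push_cast at hc
  linear_combination 2 * hc

/-- Partial fractions, using `(m + s) + (j + 1) = m + j + s + 1`. -/
lemma centralBinomRatio_succ_div_add (m j : ℕ) {s : ℝ} (hs : 0 < s) :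
    centralBinomRatio (j + 1) / (m + s) =
      (2 * (m + j + s) + 1) / (2 * (m + j + s) + 2) * (centralBinomRatio j / (m + s)) -
        1 / (2 * (m + j + s) + 2) * (centralBinomRatio j / (j + 1)) := by
  rw [centralBinomRatio_succ]
  have : (m : ℝ) + s ≠ 0 := by positivity
  have : (m : ℝ) + j + s + 1 ≠ 0 := by positivity
  field_simp
  ring

lemma sum_div_sub_add_one_eq_shiftedConv_one (k : ℕ) :
    ∑ m ∈ range (k + 1), centralBinomRatio m * centralBinomRatio (k - m) / ((k - m : ℕ) + 1) =
      shiftedConv 1 k := by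
  rw [shiftedConv, ← sum_range_reflect]
  refine sum_congr rfl fun m hm => ?_
  rw [Nat.add_sub_cancel, Nat.sub_sub_self (mem_range_succ_iff.mp hm), mul_comm]

lemma shiftedConv_succ (k : ℕ) {s : ℝ} (hs : 0 < s) :
    shiftedConv s (k + 1) =
      (2 * (k + s) + 1) / (2 * (k + s) + 2) * shiftedConv s k -
        1 / (2 * (k + s) + 2) * shiftedConv 1 k +
        centralBinomRatio (k + 1) / ((k + 1 : ℕ) + s) := by
  have hterm : ∀ m ∈ range (k + 1),
      centralBinomRatio m * centralBinomRatio (k + 1 - m) / (m + s) =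
        (2 * (k + s) + 1) / (2 * (k + s) + 2) *
            (centralBinomRatio m * centralBinomRatio (k - m) / (m + s)) -
          1 / (2 * (k + s) + 2) *
            (centralBinomRatio m * centralBinomRatio (k - m) / ((k - m : ℕ) + 1)) := by
    intro m hm
    have hmk := mem_range_succ_iff.mp hm
    have hk : (m : ℝ) + (k - m : ℕ) = k := by rw [Nat.cast_sub hmk]; ring
    rw [Nat.sub_add_comm hmk, mul_div_assoc, centralBinomRatio_succ_div_add m (k - m) hs, hk]
    ring
  rw [shiftedConv, sum_range_succ, sum_congr rfl hterm, sum_sub_distrib, ← mul_sum, ← mul_sum,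
    sum_div_sub_add_one_eq_shiftedConv_one, Nat.sub_self, centralBinomRatio_zero, mul_one]
  rfl

lemma mul_shiftedConv (k : ℕ) {p : ℕ} (hp : 1 ≤ p) :
    p * centralBinomRatio p * shiftedConv p k = centralBinomRatio (p + k) := by
  induction k generalizing p with
  | zero =>
    have : (p : ℝ) ≠ 0 := by positivity
    simp only [shiftedConv, zero_add, sum_range_one, Nat.sub_self, centralBinomRatio_zero,
      Nat.cast_zero, add_zero]
    field_simp
  | succ k ih =>
    have hp' : (0 : ℝ) < p := by exact_mod_cast hp
    have hA1 : shiftedConv 1 k = 2 * centralBinomRatio (k + 1) := by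
      have h1 := ih le_rfl
      rw [centralBinomRatio_succ 0, centralBinomRatio_zero, add_comm 1 k] at h1
      norm_num at h1
      linarith
    have : (k : ℝ) + 1 + p ≠ 0 := by positivity
    rw [shiftedConv_succ k hp', hA1, ← add_assoc, centralBinomRatio_succ (p + k), ← ih hp]
    push_cast
    field_simp
    ring

/-- With `h(p) = 4^{-p} binomial(2p,p)`, `H_l(p) = (p/(l+p)) h(p) h(l)` for `p ≥ 1`,
`H_l(0) = 1_{l=0}`, the convolution identity `h(p+k) = Σ_{l=0}^{k} H_l(p) h(k-l)` holds
for all `p ≥ 0`, `k ≥ 0`. -/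
theorem convolution_identity_h_H (h : ℕ → ℝ) (H : ℕ → ℕ → ℝ)
    (hh : ∀ p : ℕ, h p = (Nat.choose (2 * p) p : ℝ) / 4 ^ p)
    (hH1 : ∀ l p : ℕ, 1 ≤ p → H l p = ((p : ℝ) / ((l : ℝ) + p)) * h p * h l)
    (hH0 : ∀ l : ℕ, H l 0 = if l = 0 then 1 else 0)
    (p k : ℕ) :
    h (p + k) = ∑ l ∈ Finset.range (k + 1), H l p * h (k - l) := by
  obtain rfl : h = centralBinomRatio := funext fun n => (hh n).trans rfl
  rcases Nat.eq_zero_or_pos p with rfl | hp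
  · simp [hH0]
  · rw [← mul_shiftedConv k hp, shiftedConv, mul_sum]
    refine sum_congr rfl fun l _ => ?_
    rw [hH1 l p hp]
    ring
end

section
/- For p ∈ (-1,1), set b = (1/π) arccos(p), and define h_p(0) = 1 and h_p(l) = (1/(1+p)) * Γ(b)/(Γ(2l+1)Γ(b-2l)) * ₂F₁(-2l, b-1; b-2l; -1) for l ≥ 1. Then for |x| < 1, Σ_{l≥0} h_p(l) x^{2l} = (1/(1+p)) * [p + cosh(2(b-1) arctanh x)]. -/
open Real Finset

/-- Rising factorial (Pochhammer symbol) `(a)_k = a(a+1)⋯(a+k-1)` over the reals. -/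
noncomputable def poch (a : ℝ) (k : ℕ) : ℝ := ∏ j ∈ Finset.range k, (a + j)

/-- Inverse hyperbolic tangent. -/
noncomputable def arctanh (x : ℝ) : ℝ := (1 / 2) * Real.log ((1 + x) / (1 - x))

/-- The terminating Gauss hypergeometric sum `₂F₁(-2l, b-1; b-2l; -1)`. -/
noncomputable def hyp2F1term (b : ℝ) (l : ℕ) : ℝ :=
  ∑ k ∈ Finset.range (2 * l + 1),
    poch (-(2 * (l : ℝ))) k * poch (b - 1) k / (poch (b - 2 * l) k * (Nat.factorial k)) *
      (-1 : ℝ) ^ k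

section Aux
open Filter

noncomputable def fallc (a : ℝ) (n : ℕ) : ℝ := (∏ j ∈ Finset.range n, (a - j)) / n.factorial

lemma fallc_zero (a : ℝ) : fallc a 0 = 1 := by simp [fallc]

lemma fallc_succ (a : ℝ) (n : ℕ) : fallc a (n + 1) = fallc a n * ((a - n) / (n + 1)) := by
  unfold fallc
  rw [Finset.prod_range_succ, Nat.factorial_succ]
  push_cast
  have h1 : (n.factorial : ℝ) ≠ 0 := Nat.cast_ne_zero.2 n.factorial_ne_zero
  have h2 : ((n : ℝ) + 1) ≠ 0 := by positivity
  field_simp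

lemma summable_norm_fallc (a : ℝ) {y : ℝ} (hy : |y| < 1) :
    Summable (fun n => |fallc a n * y ^ n|) := by
  set ρ : ℝ := (1 + |y|) / 2 with hρ
  have hρ1 : ρ < 1 := by rw [hρ]; linarith
  have hyρ : |y| < ρ := by rw [hρ]; linarith [abs_nonneg y]
  have hρ0 : 0 < ρ := by positivity
  apply summable_of_ratio_norm_eventually_le hρ1
  filter_upwards [eventually_ge_atTop ⌈|a| * |y| / (ρ - |y|)⌉₊] with n hn
  have hn' : |a| * |y| / (ρ - |y|) ≤ n := le_trans (Nat.le_ceil _) (by exact_mod_cast hn)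
  have hsub : ρ - |y| > 0 := by linarith
  have key : |a - n| * |y| ≤ ρ * (n + 1) := by
    have h1 : |a - n| ≤ |a| + n := by
      calc |a - n| ≤ |a| + |(n:ℝ)| := abs_sub a (n:ℝ)
      _ = |a| + n := by rw [abs_of_nonneg (show (0:ℝ) ≤ (n:ℝ) by positivity)]
    have h2 : |a| * |y| ≤ n * (ρ - |y|) := by
      rw [div_le_iff₀ hsub] at hn'; linarith
    nlinarith [abs_nonneg y, abs_nonneg (a - (n:ℝ)), (show (0:ℝ) ≤ (n:ℝ) by positivity)]
  have hexp : |fallc a (n+1) * y ^ (n+1)| = |fallc a n * y ^ n| * (|a - n| * |y| / (n + 1)) := by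
    rw [fallc_succ]
    rw [show fallc a n * ((a - ↑n) / (↑n + 1)) * y ^ (n + 1)
        = (fallc a n * y ^ n) * ((a - n) * y / (n+1)) by ring]
    rw [abs_mul, abs_div, abs_mul, abs_mul, abs_of_nonneg (by positivity : (0:ℝ) ≤ (n:ℝ)+1)]
  rw [Real.norm_eq_abs, Real.norm_eq_abs, abs_abs, abs_abs, hexp]
  have hnn : (0:ℝ) < (n:ℝ) + 1 := by positivity
  have : |a - n| * |y| / (n + 1) ≤ ρ := by rw [div_le_iff₀ hnn]; linarith
  nlinarith [abs_nonneg (fallc a n * y ^ n)]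

lemma summable_deriv_bound (a : ℝ) {r : ℝ} (hr0 : 0 < r) (hr1 : r < 1) :
    Summable (fun n : ℕ => (n : ℝ) * |fallc a n| * r ^ n / r) := by
  set ρ : ℝ := (1 + r) / 2 with hρ
  have hρ1 : ρ < 1 := by rw [hρ]; linarith
  have hrρ : r < ρ := by rw [hρ]; linarith
  have hρ0 : 0 < ρ := by positivity
  apply summable_of_ratio_norm_eventually_le hρ1
  filter_upwards [eventually_ge_atTop (⌈|a| * r / (ρ - r)⌉₊ + 1)] with n hn
  have hn1 : 1 ≤ n := le_trans (Nat.le_add_left 1 _) hn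
  have hn' : |a| * r / (ρ - r) ≤ n :=
    le_trans (Nat.le_ceil _) (by exact_mod_cast le_trans (Nat.le_add_right _ 1) hn)
  have hsub : ρ - r > 0 := by linarith
  have key : |a - n| * r ≤ ρ * n := by
    have h1 : |a - n| ≤ |a| + n :=
      calc |a - n| ≤ |a| + |(n:ℝ)| := abs_sub a (n:ℝ)
      _ = |a| + n := by rw [abs_of_nonneg (show (0:ℝ) ≤ (n:ℝ) by positivity)]
    have h2 : |a| * r ≤ n * (ρ - r) := by rw [div_le_iff₀ hsub] at hn'; linarith
    nlinarith [(show (0:ℝ) ≤ (n:ℝ) by positivity)]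
  have hexp : ((n:ℝ)+1) * |fallc a (n+1)| * r ^ (n+1) / r
      = ((n:ℝ) * |fallc a n| * r ^ n / r) * (|a - n| * r / n) := by
    rw [fallc_succ, abs_mul, abs_div, abs_of_nonneg (show (0:ℝ) ≤ (n:ℝ)+1 by positivity)]
    have hne : ((n:ℝ)+1) ≠ 0 := by positivity
    have hne2 : (n:ℝ) ≠ 0 := by positivity
    field_simp
    ring
  rw [Real.norm_eq_abs, Real.norm_eq_abs]
  push_cast
  rw [hexp]
  have hn0 : (0:ℝ) < n := by positivity
  have hfrac : |a - n| * r / n ≤ ρ := by rw [div_le_iff₀ hn0]; linarith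
  have habs : (0:ℝ) ≤ (n:ℝ) * |fallc a n| * r ^ n / r := by positivity
  rw [abs_of_nonneg habs, abs_of_nonneg (by positivity : (0:ℝ) ≤ ((n:ℝ) * |fallc a n| * r ^ n / r) * (|a - n| * r / n))]
  nlinarith

theorem hasSum_binomial (a : ℝ) {x : ℝ} (hx : |x| < 1) :
    HasSum (fun n => fallc a n * x ^ n) ((1 + x) ^ a) := by
  set r : ℝ := (1 + |x|) / 2 with hrdef
  have hr0 : 0 < r := by positivity
  have hr1 : r < 1 := by rw [hrdef]; linarith
  have hxr : |x| < r := by rw [hrdef]; linarith [abs_nonneg x]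
  set t : Set ℝ := Metric.ball (0:ℝ) r with htdef
  have ht : IsOpen t := Metric.isOpen_ball
  have htc : Convex ℝ t := convex_ball 0 r
  have hmem : ∀ y ∈ t, |y| < r := by
    intro y hy
    simpa [htdef, Real.dist_eq] using hy
  have h0t : (0:ℝ) ∈ t := by simp [htdef, Metric.mem_ball, hr0]
  have hxt : x ∈ t := by simpa [htdef, Metric.mem_ball, Real.dist_eq] using hxr
  set g : ℕ → ℝ → ℝ := fun n y => fallc a n * y ^ n with hgdef
  set g' : ℕ → ℝ → ℝ := fun n y => fallc a n * (n * y ^ (n - 1)) with hg'def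
  have hg : ∀ n y, y ∈ t → HasDerivAt (g n) (g' n y) y :=
    fun n y _ => (hasDerivAt_pow n y).const_mul (fallc a n)
  set u : ℕ → ℝ := fun n => (n:ℝ) * |fallc a n| * r ^ n / r with hudef
  have hu : Summable u := summable_deriv_bound a hr0 hr1
  have hg'le : ∀ n y, y ∈ t → ‖g' n y‖ ≤ u n := by
    intro n y hy
    match n with
    | 0 => simp [hg'def, hudef]
    | (m+1) =>
      have hyr : |y| < r := hmem y hy
      have : ‖g' (m+1) y‖ = ((m:ℝ)+1) * |fallc a (m+1)| * |y| ^ m := by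
        simp only [hg'def, Real.norm_eq_abs, abs_mul, abs_pow]
        rw [abs_of_nonneg (show (0:ℝ) ≤ ((m:ℕ)+1 : ℕ) by positivity)]
        push_cast
        ring
      rw [this]
      have hpow : |y| ^ m ≤ r ^ m := pow_le_pow_left₀ (abs_nonneg y) hyr.le m
      have : u (m+1) = ((m:ℝ)+1) * |fallc a (m+1)| * r ^ m := by
        rw [hudef]
        have : r ^ (m+1) / r = r ^ m := by
          rw [pow_succ]; field_simp
        push_cast
        rw [mul_div_assoc, this]
      rw [this]
      have h1 : (0:ℝ) ≤ ((m:ℝ)+1) * |fallc a (m+1)| := by positivity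
      exact mul_le_mul_of_nonneg_left hpow h1
  have hSsum : ∀ y ∈ t, Summable fun n => g n y := by
    intro y hy
    exact (summable_norm_fallc a (lt_trans (hmem y hy) hr1)).of_abs
  have hS' : ∀ y ∈ t, HasDerivAt (fun z => ∑' n, g n z) (∑' n, g' n y) y := by
    intro y hy
    exact hasDerivAt_tsum_of_isPreconnected hu ht htc.isPreconnected hg hg'le h0t
      (hSsum 0 h0t) hy
  set S : ℝ → ℝ := fun z => ∑' n, g n z with hSdef
  have key : ∀ y ∈ t, (1 + y) * (∑' n, g' n y) = a * S y := by
    intro y hy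
    have hsum' : Summable (fun n => g' n y) :=
      Summable.of_norm_bounded hu (fun n => hg'le n y hy)
    have hshift : Summable (fun n => g' (n+1) y) := (summable_nat_add_iff 1).2 hsum'
    have hmul : Summable (fun n : ℕ => (n:ℝ) * fallc a n * y ^ n) := by
      have : (fun n : ℕ => (n:ℝ) * fallc a n * y ^ n) = fun n => y * g' n y := by
        funext n
        match n with
        | 0 => simp [hg'def]
        | (m+1) =>
          simp only [hg'def]
          push_cast
          ring
      rw [this]
      exact hsum'.mul_left y
    have e1 : ∑' n, g' n y = ∑' n, g' (n+1) y := by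
      rw [Summable.tsum_eq_zero_add hsum']
      simp [hg'def]
    have e2 : y * (∑' n, g' n y) = ∑' n : ℕ, (n:ℝ) * fallc a n * y ^ n := by
      rw [← tsum_mul_left]
      apply tsum_congr
      intro n
      match n with
      | 0 => simp [hg'def]
      | (m+1) =>
        simp only [hg'def]
        push_cast
        ring
    have e3 : (1 + y) * (∑' n, g' n y) = (∑' n, g' (n+1) y) + ∑' n : ℕ, (n:ℝ) * fallc a n * y ^ n := by
      rw [add_mul, one_mul, e2]
      rw [← e1]
    rw [e3, ← Summable.tsum_add hshift hmul]
    have e4 : ∀ n : ℕ, g' (n+1) y + (n:ℝ) * fallc a n * y ^ n = a * g n y := by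
      intro n
      have hrec : fallc a (n+1) * ((n:ℝ)+1) = fallc a n * (a - n) := by
        rw [fallc_succ]
        have : ((n:ℝ)+1) ≠ 0 := by positivity
        field_simp
      simp only [hg'def, hgdef]
      push_cast
      linear_combination y ^ n * hrec
    rw [tsum_congr e4, tsum_mul_left]
  have h1y : ∀ y ∈ t, (0:ℝ) < 1 + y := by
    intro y hy
    have := hmem y hy
    have := abs_lt.1 this
    linarith
  set q : ℝ → ℝ := fun y => S y * (1 + y) ^ (-a) with hqdef
  have hq : ∀ y ∈ t, HasDerivAt q 0 y := by
    intro y hy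
    have hpos := h1y y hy
    have hrpow : HasDerivAt (fun z : ℝ => (1 + z) ^ (-a)) (1 * (-a) * (1 + y) ^ (-a - 1)) y :=
      HasDerivAt.rpow_const ((hasDerivAt_id y).const_add 1) (Or.inl hpos.ne')
    have hd : HasDerivAt q ((∑' n, g' n y) * (1 + y) ^ (-a) + S y * (1 * (-a) * (1 + y) ^ (-a - 1))) y :=
      (hS' y hy).mul hrpow
    have hzero : (∑' n, g' n y) * (1 + y) ^ (-a) + S y * (1 * (-a) * (1 + y) ^ (-a - 1)) = 0 := by
      have hsplit : (1 + y) ^ (-a) = (1 + y) ^ (-a - 1) * (1 + y) := by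
        have h2 := Real.rpow_add hpos (-a-1) 1
        rw [Real.rpow_one] at h2
        conv_lhs => rw [show -a = -a-1+1 by ring]
        exact h2
      rw [hsplit]
      linear_combination ((1 + y) ^ (-a - 1)) * key y hy
    rwa [hzero] at hd
  have hconst : q x = q 0 := by
    apply htc.is_const_of_fderivWithin_eq_zero (𝕜 := ℝ)
      (fun z hz => (hq z hz).differentiableAt.differentiableWithinAt) _ hxt h0t
    intro z hz
    rw [fderivWithin_of_isOpen ht hz]
    have := (hq z hz).hasFDerivAt.fderiv
    rw [this]
    ext
    simp
  have hS0 : S 0 = 1 := by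
    rw [hSdef]
    simp only
    rw [tsum_eq_single 0]
    · simp [hgdef, fallc_zero]
    · intro n hn
      simp [hgdef, zero_pow hn]
  have hq0 : q 0 = 1 := by
    simp [hqdef, hS0, Real.one_rpow]
  have hpow_pos : (0:ℝ) < (1 + x) ^ a := Real.rpow_pos_of_pos (h1y x hxt) a
  have hSx : S x = (1 + x) ^ a := by
    rw [hq0] at hconst
    have h1 : S x * (1 + x) ^ (-a) = 1 := hconst
    rw [Real.rpow_neg (h1y x hxt).le, mul_inv_eq_one₀ hpow_pos.ne'] at h1
    exact h1
  have := (hSsum x hxt).hasSum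
  rwa [show ∑' n, g n x = (1+x)^a from hSx] at this

lemma poch_ne_zero (x : ℝ) (hx : ∀ j : ℕ, x + j ≠ 0) (k : ℕ) : poch x k ≠ 0 := by
  unfold poch
  exact Finset.prod_ne_zero_iff.2 fun j _ => hx j

lemma Gamma_eq_poch_mul (x : ℝ) (hx : ∀ m : ℕ, x + m ≠ 0) :
    ∀ n : ℕ, Real.Gamma (x + n) = poch x n * Real.Gamma x := by
  intro n
  induction n with
  | zero => simp [poch]
  | succ n ih =>
    have h1 : x + ((n:ℝ) + 1) = (x + n) + 1 := by ring
    push_cast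
    rw [h1, Real.Gamma_add_one (hx n), ih]
    rw [show poch x (n+1) = poch x n * (x + n) from Finset.prod_range_succ _ n]
    ring

lemma fall_eq_poch (b : ℝ) (m : ℕ) :
    (∏ j ∈ Finset.range m, (b - 1 - j)) = poch (b - m) m := by
  unfold poch
  rw [← Finset.prod_range_reflect]
  apply Finset.prod_congr rfl
  intro j hj
  have hj' : j < m := Finset.mem_range.1 hj
  have hcast : ((m - 1 - j : ℕ) : ℝ) = (m:ℝ) - 1 - j := by
    have h2 : m - 1 - j = m - (1 + j) := by omega
    rw [h2, Nat.cast_sub (by omega : 1 + j ≤ m)]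
    push_cast
    ring
  rw [hcast]
  ring

lemma poch_neg_nat (m : ℕ) : ∀ k : ℕ, k ≤ m →
    poch (-(m:ℝ)) k * (-1)^k * ((m - k).factorial : ℝ) = (m.factorial : ℝ) := by
  intro k
  induction k with
  | zero => simp [poch]
  | succ k ih =>
    intro hk
    have hk' : k ≤ m := Nat.le_of_succ_le hk
    have ihh := ih hk'
    have hms : m - k = (m - (k+1)) + 1 := by omega
    have hfac : ((m - k).factorial : ℝ) = ((m:ℝ) - k) * ((m - (k+1)).factorial : ℝ) := by
      rw [hms, Nat.factorial_succ]
      have : ((m - (k+1) + 1 : ℕ) : ℝ) = (m:ℝ) - k := by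
        push_cast [Nat.cast_sub hk]
        ring
      push_cast
      rw [← this]
      push_cast
      ring
    rw [hfac] at ihh
    rw [show poch (-(m:ℝ)) (k+1) = poch (-(m:ℝ)) k * (-(m:ℝ) + k) from Finset.prod_range_succ _ k]
    push_cast
    linear_combination ihh

lemma fallc_neg_eq (b : ℝ) (k : ℕ) :
    fallc (1 - b) k * (-1)^k = poch (b - 1) k / (k.factorial : ℝ) := by
  unfold fallc poch
  rw [div_mul_eq_mul_div]
  congr 1
  rw [show ((-1:ℝ))^k = ∏ _j ∈ Finset.range k, (-1:ℝ) by rw [Finset.prod_const]; simp]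
  rw [← Finset.prod_mul_distrib]
  apply Finset.prod_congr rfl
  intro j _
  ring

lemma coeff_eq (b : ℝ) (hbz : ∀ z : ℤ, b ≠ (z:ℝ)) (l : ℕ) :
    Real.Gamma b / (Real.Gamma (2 * (l:ℝ) + 1) * Real.Gamma (b - 2 * l)) * hyp2F1term b l
    = ∑ k ∈ Finset.range (2 * l + 1),
        fallc (b-1) k * (fallc (1-b) (2*l-k) * (-1)^(2*l-k)) := by
  set m : ℕ := 2 * l with hm
  have hnonint : ∀ c : ℕ, ∀ j : ℕ, (b - (c:ℝ)) + j ≠ 0 := by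
    intro c j hzero
    exact hbz ((c:ℤ) - j) (by push_cast; linarith)
  have hGne : ∀ c : ℕ, Real.Gamma (b - (c:ℝ)) ≠ 0 := by
    intro c
    apply Real.Gamma_ne_zero
    intro j hzero
    exact hbz ((c:ℤ) - j) (by push_cast; linarith)
  -- rewrite Gamma (2l+1) as factorial
  have hGfac : Real.Gamma (2 * (l:ℝ) + 1) = (m.factorial : ℝ) := by
    rw [show 2 * (l:ℝ) = ((m:ℕ):ℝ) by push_cast [hm]; ring]
    exact Real.Gamma_nat_eq_factorial m
  have hcast2l : b - 2 * (l:ℝ) = b - ((m:ℕ):ℝ) := by push_cast [hm]; ring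
  -- RHS reflected
  have hrefl : ∑ k ∈ Finset.range (m + 1),
        fallc (b-1) k * (fallc (1-b) (m-k) * (-1:ℝ)^(m-k))
      = ∑ k ∈ Finset.range (m + 1),
        fallc (b-1) (m-k) * (fallc (1-b) k * (-1:ℝ)^k) := by
    rw [← Finset.sum_range_reflect]
    apply Finset.sum_congr rfl
    intro k hk
    have hk' : k ≤ m := Nat.lt_succ_iff.1 (Finset.mem_range.1 hk)
    rw [show m + 1 - 1 - k = m - k by omega, show m - (m - k) = k by omega]
  rw [hrefl]
  have hconv : hyp2F1term b l = ∑ k ∈ Finset.range (m + 1),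
      poch (-((m:ℕ):ℝ)) k * poch (b - 1) k / (poch (b - ((m:ℕ):ℝ)) k * (Nat.factorial k)) *
        (-1 : ℝ) ^ k := by
    unfold hyp2F1term
    apply Finset.sum_congr rfl
    intro k _
    rw [show (2 * (l:ℝ)) = ((m:ℕ):ℝ) by push_cast [hm]; ring]
  rw [hconv, hGfac, hcast2l, Finset.mul_sum]
  apply Finset.sum_congr rfl
  intro k hk
  have hk' : k ≤ m := Nat.lt_succ_iff.1 (Finset.mem_range.1 hk)
  have hne1 : Real.Gamma (b - ((m:ℕ):ℝ)) ≠ 0 := hGne m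
  have hne1' : Real.Gamma (b - ((m-k:ℕ):ℝ)) ≠ 0 := hGne (m-k)
  have hne2 : poch (b - ((m:ℕ):ℝ)) k ≠ 0 := poch_ne_zero _ (hnonint m) k
  have hne3 : (Nat.factorial k : ℝ) ≠ 0 := Nat.cast_ne_zero.2 k.factorial_ne_zero
  have hne4 : ((m-k).factorial : ℝ) ≠ 0 := Nat.cast_ne_zero.2 (m-k).factorial_ne_zero
  have hne5 : (m.factorial : ℝ) ≠ 0 := Nat.cast_ne_zero.2 m.factorial_ne_zero
  have hfk : fallc (1-b) k * (-1:ℝ)^k = poch (b-1) k / (Nat.factorial k : ℝ) := fallc_neg_eq b k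
  have hGmk : Real.Gamma b = poch (b - ((m-k:ℕ):ℝ)) (m-k) * Real.Gamma (b - ((m-k:ℕ):ℝ)) := by
    have h6 := Gamma_eq_poch_mul (b - ((m-k:ℕ):ℝ)) (hnonint (m-k)) (m-k)
    rw [show b - ((m-k:ℕ):ℝ) + ((m-k:ℕ):ℝ) = b by ring] at h6
    exact h6
  have hpoch2 : Real.Gamma (b - ((m-k:ℕ):ℝ)) = poch (b - ((m:ℕ):ℝ)) k * Real.Gamma (b - ((m:ℕ):ℝ)) := by
    have h7 := Gamma_eq_poch_mul (b - ((m:ℕ):ℝ)) (hnonint m) k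
    rw [show b - ((m:ℕ):ℝ) + (k:ℝ) = b - ((m-k:ℕ):ℝ) by rw [Nat.cast_sub hk']; ring] at h7
    exact h7
  have hfmk : fallc (b-1) (m-k)
      = Real.Gamma b / (poch (b - ((m:ℕ):ℝ)) k * Real.Gamma (b - ((m:ℕ):ℝ)) * ((m-k).factorial : ℝ)) := by
    unfold fallc
    rw [fall_eq_poch b (m-k)]
    have h5 : poch (b - ((m-k:ℕ):ℝ)) (m-k) = Real.Gamma b / Real.Gamma (b - ((m-k:ℕ):ℝ)) := by
      rw [eq_div_iff hne1']
      linarith [hGmk]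
    rw [h5, hpoch2, div_div]
  have hp3 : poch (-((m:ℕ):ℝ)) k * (-1:ℝ)^k = (m.factorial : ℝ) / ((m-k).factorial : ℝ) := by
    rw [eq_div_iff hne4]
    exact poch_neg_nat m k hk'
  have hLHS : poch (-((m:ℕ):ℝ)) k * poch (b-1) k / (poch (b - ((m:ℕ):ℝ)) k * (Nat.factorial k : ℝ)) * (-1:ℝ)^k
      = (m.factorial:ℝ) / ((m-k).factorial:ℝ) * poch (b-1) k / (poch (b - ((m:ℕ):ℝ)) k * (Nat.factorial k : ℝ)) := by
    rw [← hp3]; ring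
  rw [hLHS, hfmk, hfk]
  field_simp

end Aux

/-- For `p ∈ (-1,1)`, `b = (1/π) arccos p`, and `h_p(0) = 1`,
`h_p(l) = (1/(1+p)) Γ(b)/(Γ(2l+1)Γ(b-2l)) ₂F₁(-2l, b-1; b-2l; -1)` for `l ≥ 1`,
one has `Σ_{l≥0} h_p(l) x^{2l} = (1/(1+p)) [p + cosh(2(b-1) arctanh x)]` for `|x| < 1`. -/
theorem hdown_generating_function (p : ℝ) (hp : p ∈ Set.Ioo (-1 : ℝ) 1)
    (b : ℝ) (hb : b = Real.arccos p / π)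
    (h : ℕ → ℝ) (h0 : h 0 = 1)
    (hl : ∀ l : ℕ, 1 ≤ l → h l =
      (1 / (1 + p)) * (Real.Gamma b / (Real.Gamma (2 * l + 1) * Real.Gamma (b - 2 * l))) *
        hyp2F1term b l)
    (x : ℝ) (hx : |x| < 1) :
    HasSum (fun l : ℕ => h l * x ^ (2 * l))
      ((1 / (1 + p)) * (p + Real.cosh (2 * (b - 1) * arctanh x))) := by
  obtain ⟨hpm, hpp⟩ := hp
  have hpi : (0:ℝ) < π := Real.pi_pos
  have hb0 : 0 < b := by
    rw [hb]
    exact div_pos (Real.arccos_pos.2 hpp) hpi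
  have hb1 : b < 1 := by
    rw [hb, div_lt_one hpi, Real.arccos, sub_lt_iff_lt_add]
    have := Real.neg_pi_div_two_lt_arcsin.2 hpm
    linarith
  have hbz : ∀ z : ℤ, b ≠ (z:ℝ) := by
    intro z hzz
    rcases le_or_gt z 0 with hz | hz
    · have : (z:ℝ) ≤ 0 := by exact_mod_cast hz
      linarith
    · have : (1:ℝ) ≤ (z:ℝ) := by exact_mod_cast hz
      linarith
  have hxx := abs_lt.1 hx
  have h1x : (0:ℝ) < 1 + x := by linarith
  have h1mx : (0:ℝ) < 1 - x := by linarith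
  have hp1 : (1:ℝ) + p ≠ 0 := by linarith
  have hnx : |(-x)| < 1 := by rwa [abs_neg]
  -- Cauchy products
  have s1 := hasSum_binomial (b - 1) hx
  have s2 := hasSum_binomial (1 - b) hnx
  have s1' := hasSum_binomial (b - 1) hnx
  have s2' := hasSum_binomial (1 - b) hx
  have n1 : Summable fun n => ‖fallc (b-1) n * x ^ n‖ := by
    simp only [Real.norm_eq_abs]; exact summable_norm_fallc (b-1) hx
  have n2 : Summable fun n => ‖fallc (1-b) n * (-x) ^ n‖ := by
    simp only [Real.norm_eq_abs]; exact summable_norm_fallc (1-b) hnx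
  have n1' : Summable fun n => ‖fallc (b-1) n * (-x) ^ n‖ := by
    simp only [Real.norm_eq_abs]; exact summable_norm_fallc (b-1) hnx
  have n2' : Summable fun n => ‖fallc (1-b) n * x ^ n‖ := by
    simp only [Real.norm_eq_abs]; exact summable_norm_fallc (1-b) hx
  have C1 := hasSum_sum_range_mul_of_summable_norm n1 n2
  have C2 := hasSum_sum_range_mul_of_summable_norm n1' n2'
  rw [s1.tsum_eq, s2.tsum_eq] at C1
  rw [s1'.tsum_eq, s2'.tsum_eq] at C2
  rw [show (1 + -x) = 1 - x by ring] at C1 C2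
  set C : ℕ → ℝ := fun n => ∑ k ∈ Finset.range (n+1),
      fallc (b-1) k * (fallc (1-b) (n-k) * (-1:ℝ)^(n-k)) with hC
  have E1 : HasSum (fun n => C n * x ^ n) ((1+x)^(b-1) * (1-x)^(1-b)) := by
    have : (fun n => ∑ k ∈ Finset.range (n+1),
        (fallc (b-1) k * x ^ k) * (fallc (1-b) (n-k) * (-x) ^ (n-k)))
        = fun n => C n * x ^ n := by
      funext n
      rw [hC, Finset.sum_mul]
      apply Finset.sum_congr rfl
      intro k hk
      have hk' : k ≤ n := Nat.lt_succ_iff.1 (Finset.mem_range.1 hk)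
      obtain ⟨m, rfl⟩ : ∃ m, n = k + m := ⟨n - k, by omega⟩
      rw [show k + m - k = m by omega, neg_pow x m, pow_add x k m]
      ring
    rwa [this] at C1
  have E2 : HasSum (fun n => C n * (-x) ^ n) ((1-x)^(b-1) * (1+x)^(1-b)) := by
    have : (fun n => ∑ k ∈ Finset.range (n+1),
        (fallc (b-1) k * (-x) ^ k) * (fallc (1-b) (n-k) * x ^ (n-k)))
        = fun n => C n * (-x) ^ n := by
      funext n
      rw [hC, Finset.sum_mul]
      apply Finset.sum_congr rfl
      intro k hk
      have hk' : k ≤ n := Nat.lt_succ_iff.1 (Finset.mem_range.1 hk)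
      obtain ⟨m, rfl⟩ : ∃ m, n = k + m := ⟨n - k, by omega⟩
      rw [show k + m - k = m by omega]
      rw [neg_pow x k, neg_pow x (k+m), pow_add x k m, pow_add (-1:ℝ) k m]
      have hsq : (-1:ℝ)^m * (-1)^m = 1 := by
        rw [← pow_add]; exact Even.neg_one_pow ⟨m, rfl⟩
      linear_combination (-(fallc (b-1) k * fallc (1-b) m * (-1:ℝ)^k * x^k * x^m)) * hsq
    rwa [this] at C2
  have E := E1.add E2
  have inj : Function.Injective (fun l : ℕ => 2 * l) := fun a b hab => by
    simp only at hab; omega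
  have vanish : ∀ n ∉ Set.range (fun l : ℕ => 2 * l), C n * x ^ n + C n * (-x) ^ n = 0 := by
    intro n hn
    have hodd : Odd n := by
      rcases Nat.even_or_odd n with he | ho
      · exfalso
        apply hn
        obtain ⟨r, hr⟩ := he
        exact ⟨r, by simp only; omega⟩
      · exact ho
    rw [hodd.neg_pow]
    ring
  have E' := (inj.hasSum_iff vanish).mpr E
  have Ebase : HasSum (fun l : ℕ => (1/(1+p)) * C (2*l) * x ^ (2*l))
      ((1/(1+p)) * (((1+x)^(b-1) * (1-x)^(1-b) + (1-x)^(b-1) * (1+x)^(1-b)) / 2)) := by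
    have := E'.mul_left ((1/(1+p)) * (1/2))
    have heq : (fun l : ℕ => (1/(1+p)) * (1/2) *
        ((fun n => C n * x ^ n + C n * (-x) ^ n) ∘ (fun l : ℕ => 2 * l)) l)
        = fun l : ℕ => (1/(1+p)) * C (2*l) * x ^ (2*l) := by
      funext l
      simp only [Function.comp_apply]
      rw [show ((-x) ^ (2*l) : ℝ) = x ^ (2*l) from (Even.neg_pow ⟨l, by ring⟩ x)]
      ring
    rw [heq] at this
    convert this using 1
    · rfl
    ring
  -- identify coefficients
  have hfun : Function.update (fun l : ℕ => (1/(1+p)) * C (2*l) * x ^ (2*l)) 0 1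
      = fun l : ℕ => h l * x ^ (2*l) := by
    funext l
    match l with
    | 0 => simp [Function.update_self, h0]
    | (l+1) =>
      rw [Function.update_of_ne (by omega : l + 1 ≠ 0)]
      rw [hl (l+1) (by omega)]
      have hcc := coeff_eq b hbz (l+1)
      push_cast at hcc ⊢
      conv_rhs => rw [mul_assoc (1 / (1+p)), hcc]
  have final := Ebase.update 0 1
  rw [hfun] at final
  have hC0 : C 0 = 1 := by
    rw [hC]
    simp [fallc_zero]
  -- value identification
  have hu : (0:ℝ) < (1+x)/(1-x) := div_pos h1x h1mx
  have hval1 : (1+x)^(b-1) * (1-x)^(1-b) = ((1+x)/(1-x))^(b-1) := by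
    rw [Real.div_rpow h1x.le h1mx.le, show (1-b) = -(b-1) by ring,
      Real.rpow_neg h1mx.le, div_eq_mul_inv]
  have hval2 : (1-x)^(b-1) * (1+x)^(1-b) = ((1+x)/(1-x))^(1-b) := by
    rw [Real.div_rpow h1x.le h1mx.le, show (b-1) = -(1-b) by ring,
      Real.rpow_neg h1mx.le, div_eq_mul_inv]
    ring
  have hcosh : Real.cosh (2 * (b-1) * arctanh x)
      = (((1+x)/(1-x))^(b-1) + ((1+x)/(1-x))^(1-b)) / 2 := by
    have e1 : 2 * (b-1) * arctanh x = Real.log ((1+x)/(1-x)) * (b-1) := by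
      unfold arctanh; ring
    rw [e1, Real.cosh_eq, Real.rpow_def_of_pos hu, Real.rpow_def_of_pos hu,
      show Real.log ((1+x)/(1-x)) * (1-b) = -(Real.log ((1+x)/(1-x)) * (b-1)) by ring]
  convert final using 1
  · rfl
  rw [hC0, hcosh, ← hval1, ← hval2]
  rw [show x ^ (2*0) = (1:ℝ) by norm_num]
  field_simp
  ring
end

section
/- Let b ∈ (0,1/2) and Ψ↓(z) = (1/π) Γ(1+2b-z) Γ(1-b+z) [cos(πb) - cos(πz - πb)]. Then Ψ↓(0) = 0, Ψ↓ is analytic on a neighbourhood of 0, and (Ψ↓)'(0) < 0. -/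
open Real

/-! `Ψ↓` is the product of `A(z) = Γ(1+2b-z) Γ(1-b+z) / π`, which is analytic and positive near `0`,
and `g(z) = cos(πb) - cos(πz - πb)`, which vanishes at `0`. Hence `Ψ↓(0) = 0` and
`(Ψ↓)'(0) = A(0) g'(0) = -A(0) π sin(πb) < 0`. -/

/-- `Γ` is the reciprocal of the entire function `1/Γ`, which does not vanish away from the poles. -/
theorem Complex.analyticAt_Gamma {s : ℂ} (hs : ∀ m : ℕ, s ≠ -m) : AnalyticAt ℂ Gamma s := by
  have h := (differentiable_one_div_Gamma.analyticAt s).inv (inv_ne_zero (Gamma_ne_zero hs))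
  rwa [show (fun z => (Gamma z)⁻¹)⁻¹ = Gamma from funext fun z => inv_inv (Gamma z)] at h

theorem Real.analyticAt_Gamma {x : ℝ} (hx : ∀ m : ℕ, x ≠ -m) : AnalyticAt ℝ Gamma x := by
  have hx' : ∀ m : ℕ, (x : ℂ) ≠ -m := fun m => by exact_mod_cast hx m
  simpa only [Complex.Gamma_ofReal, Complex.ofReal_re] using
    (Complex.analyticAt_Gamma hx').re_ofReal

theorem Real.analyticAt_Gamma_of_pos {x : ℝ} (hx : 0 < x) : AnalyticAt ℝ Gamma x :=
  Real.analyticAt_Gamma fun m h => by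
    have : (0 : ℝ) ≤ m := m.cast_nonneg
    linarith

theorem DifferentiableAt.hasDerivAt_mul_of_eq_zero {𝕜 : Type*} [NontriviallyNormedField 𝕜]
    {f g : 𝕜 → 𝕜} {x g' : 𝕜} (hf : DifferentiableAt 𝕜 f x) (hg : HasDerivAt g g' x)
    (hgx : g x = 0) : HasDerivAt (fun y => f y * g y) (f x * g') x :=
  (hf.hasDerivAt.mul hg).congr_deriv (by rw [hgx, mul_zero, zero_add])

theorem hasDerivAt_cos_sub_cos_mul_sub (a c : ℝ) :
    HasDerivAt (fun z : ℝ => cos c - cos (a * z - c)) (-(a * sin c)) 0 := by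
  have hlin : HasDerivAt (fun z : ℝ => a * z - c) a 0 := by
    simpa using ((hasDerivAt_id (0 : ℝ)).const_mul a).sub_const c
  refine ((hasDerivAt_const (0 : ℝ) (cos c)).sub hlin.cos).congr_deriv ?_
  simp only [mul_zero, zero_sub, sin_neg]
  ring

/-- For `b ∈ (0,1/2)` and
`Ψ↓(z) = (1/π) Γ(1+2b-z) Γ(1-b+z) [cos(πb) - cos(πz - πb)]`, one has `Ψ↓(0) = 0`,
`Ψ↓` is (real-)analytic in a neighbourhood of `0`, and `(Ψ↓)'(0) < 0`. -/
theorem laplace_exponent_down_at_zero (b : ℝ) (hb : b ∈ Set.Ioo (0 : ℝ) (1 / 2))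
    (Ψ : ℝ → ℝ)
    (hΨ : ∀ z : ℝ, Ψ z = (1 / π) * Real.Gamma (1 + 2 * b - z) * Real.Gamma (1 - b + z) *
      (Real.cos (π * b) - Real.cos (π * z - π * b))) :
    Ψ 0 = 0 ∧ AnalyticAt ℝ Ψ 0 ∧ deriv Ψ 0 < 0 := by
  obtain ⟨hb0, hb1⟩ := hb
  set A : ℝ → ℝ := fun z => (1 / π) * Gamma (1 + 2 * b - z) * Gamma (1 - b + z)
  set g : ℝ → ℝ := fun z => cos (π * b) - cos (π * z - π * b)
  have hΨAg : Ψ = fun z => A z * g z := funext hΨ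
  have hA : AnalyticAt ℝ A 0 :=
    (analyticAt_const.mul ((analyticAt_Gamma_of_pos (by linarith)).comp (by fun_prop))).mul
      ((analyticAt_Gamma_of_pos (by linarith)).comp (by fun_prop))
  have hA0 : 0 < A 0 := by
    have := Gamma_pos_of_pos (show 0 < 1 + 2 * b - 0 by linarith)
    have := Gamma_pos_of_pos (show 0 < 1 - b + 0 by linarith)
    positivity
  have hg0 : g 0 = 0 := by simp [g]
  have hsin : 0 < sin (π * b) := sin_pos_of_pos_of_lt_pi (by positivity) (by nlinarith [pi_pos])
  have hderiv : deriv Ψ 0 = -(A 0 * π * sin (π * b)) := by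
    rw [hΨAg, (hA.differentiableAt.hasDerivAt_mul_of_eq_zero
      (hasDerivAt_cos_sub_cos_mul_sub π (π * b)) hg0).deriv]
    ring
  refine ⟨hΨAg ▸ mul_eq_zero_of_right _ hg0, hΨAg ▸ hA.mul (by fun_prop), ?_⟩
  exact hderiv ▸ neg_neg_of_pos (mul_pos (mul_pos hA0 pi_pos) hsin)
end
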